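/- Let α₁, α₂ ∈ ℝ[X] be polynomials of degree at most 1 that are linearly independent over ℝ, let β ∈ ℝ[X] have degree at most 2, and suppose the pairs (β₁, β₂) and (β₁′, β₂′), all four polynomials of degree at most 1, both satisfy β = α₁β₂ − α₂β₁ and β = α₁β₂′ − α₂β₁′. Then there exists r ∈ ℝ such that β₁′ = β₁ + r·α₁ and β₂′ = β₂ + r·α₂. Hence the set of solutions (β₁, β₂) of degree at most 1 of the relation β = α₁β₂ − α₂β₁ forms a one-parametric family. -/
import Mathlib



private lemma one_le_of_pos_withbot {d : WithBot ℕ} (h : 0 < d) : 1 ≤ d := by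
  induction d using WithBot.recBotCoe with
  | bot => exact absurd h (by simp)
  | coe n =>
    have hn : 0 < n := by
      by_contra hn
      push_neg at hn
      interval_cases n
      simp at h
    calc (1 : WithBot ℕ) = ((1:ℕ) : WithBot ℕ) := by norm_cast
    _ ≤ (n : WithBot ℕ) := by exact_mod_cast hn

/-- For linearly independent `α₁, α₂` of degree at most 1 and `β` of degree at most 2,
two solutions `(β₁, β₂)` and `(β₁′, β₂′)` (all of degree at most 1) of
`β = α₁β₂ − α₂β₁` differ by a real multiple of `(α₁, α₂)`: the solutions form a
one-parametric family. -/
theorem beta_decomposition_one_parameter_family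
    (α₁ α₂ : Polynomial ℝ) (h₁ : α₁.degree ≤ 1) (h₂ : α₂.degree ≤ 1)
    (hli : LinearIndependent ℝ ![α₁, α₂])
    (β : Polynomial ℝ) (hβ : β.degree ≤ 2)
    (β₁ β₂ β₁' β₂' : Polynomial ℝ)
    (hb₁ : β₁.degree ≤ 1) (hb₂ : β₂.degree ≤ 1)
    (hb₁' : β₁'.degree ≤ 1) (hb₂' : β₂'.degree ≤ 1)
    (hsol : β = α₁ * β₂ - α₂ * β₁) (hsol' : β = α₁ * β₂' - α₂ * β₁') :
    ∃ r : ℝ, β₁' = β₁ + r • α₁ ∧ β₂' = β₂ + r • α₂ := by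
  classical
  have hpair := LinearIndependent.pair_iff.mp hli
  have hα₁ : α₁ ≠ 0 := by
    intro h
    have := hpair 1 0 (by simp [h])
    exact one_ne_zero this.1
  have hα₂ : α₂ ≠ 0 := by
    intro h
    have := hpair 0 1 (by simp [h])
    exact one_ne_zero this.2
  -- The key equation
  have key : α₁ * (β₂' - β₂) = α₂ * (β₁' - β₁) := by
    have : α₁ * β₂ - α₂ * β₁ = α₁ * β₂' - α₂ * β₁' := by rw [← hsol, ← hsol']
    linear_combination -this
  -- α₁ and α₂ are coprime
  have hcop : IsCoprime α₁ α₂ := by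
    rw [← EuclideanDomain.gcd_isUnit_iff]
    by_contra hg
    set g := EuclideanDomain.gcd α₁ α₂ with hgdef
    have hg0 : g ≠ 0 := fun h => hα₁ (EuclideanDomain.gcd_eq_zero_iff.mp h).1
    obtain ⟨u, hu⟩ := EuclideanDomain.gcd_dvd_left α₁ α₂
    obtain ⟨v, hv⟩ := EuclideanDomain.gcd_dvd_right α₁ α₂
    have hgdeg : ¬ g.degree ≤ 0 := by
      intro hle
      obtain ⟨c, hc⟩ : ∃ c, g = Polynomial.C c := ⟨_, Polynomial.degree_le_zero_iff.mp hle⟩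
      have hc0 : c ≠ 0 := fun h => hg0 (by rw [hc, h, map_zero])
      exact hg (hc ▸ Polynomial.isUnit_C.mpr (isUnit_iff_ne_zero.mpr hc0))
    have hudeg : u.degree ≤ 0 := by
      by_contra hud
      push_neg at hud
      have hd : α₁.degree = g.degree + u.degree := by rw [hu, Polynomial.degree_mul]
      have hg1 : (1 : WithBot ℕ) ≤ g.degree := one_le_of_pos_withbot (lt_of_not_ge hgdeg)
      have : (2 : WithBot ℕ) ≤ α₁.degree := by
        rw [hd]
        calc (2 : WithBot ℕ) = 1 + 1 := by norm_num
        _ ≤ g.degree + u.degree := add_le_add hg1 (one_le_of_pos_withbot hud)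
      exact absurd (le_trans this h₁) (by norm_num)
    have hvdeg : v.degree ≤ 0 := by
      by_contra hvd
      push_neg at hvd
      have hd : α₂.degree = g.degree + v.degree := by rw [hv, Polynomial.degree_mul]
      have hg1 : (1 : WithBot ℕ) ≤ g.degree := one_le_of_pos_withbot (lt_of_not_ge hgdeg)
      have : (2 : WithBot ℕ) ≤ α₂.degree := by
        rw [hd]
        calc (2 : WithBot ℕ) = 1 + 1 := by norm_num
        _ ≤ g.degree + v.degree := add_le_add hg1 (one_le_of_pos_withbot hvd)
      exact absurd (le_trans this h₂) (by norm_num)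
    obtain ⟨a, ha⟩ : ∃ a, u = Polynomial.C a := ⟨u.coeff 0, Polynomial.degree_le_zero_iff.mp hudeg⟩
    obtain ⟨b, hb⟩ : ∃ b, v = Polynomial.C b := ⟨v.coeff 0, Polynomial.degree_le_zero_iff.mp hvdeg⟩
    have ha0 : a ≠ 0 := by
      rintro rfl
      simp [ha] at hu
      exact hα₁ hu
    have hu' : α₁ = g * Polynomial.C a := by rw [← ha]; exact hu
    have hv' : α₂ = g * Polynomial.C b := by rw [← hb]; exact hv
    have hdep : b • α₁ + (-a) • α₂ = 0 := by
      rw [Polynomial.smul_eq_C_mul, Polynomial.smul_eq_C_mul, map_neg]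
      linear_combination Polynomial.C b * hu' - Polynomial.C a * hv' 
    exact ha0 (neg_eq_zero.mp (hpair b (-a) hdep).2)
  -- α₁ divides β₁' - β₁
  have hdvd : α₁ ∣ (β₁' - β₁) := hcop.dvd_of_dvd_mul_left ⟨β₂' - β₂, key.symm⟩
  obtain ⟨q, hq⟩ := hdvd
  have hq2 : β₂' - β₂ = α₂ * q := by
    have : α₁ * (β₂' - β₂) = α₁ * (α₂ * q) := by rw [key, hq]; ring
    exact mul_left_cancel₀ hα₁ this
  -- q is constant
  have hqdeg : q.degree ≤ 0 := by
    by_contra hqd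
    push_neg at hqd
    have hq1 : (1 : WithBot ℕ) ≤ q.degree := one_le_of_pos_withbot hqd
    -- then deg α₁ ≤ 0 and deg α₂ ≤ 0
    have hα₁deg : α₁.degree ≤ 0 := by
      by_contra h
      push_neg at h
      have h1 : (1 : WithBot ℕ) ≤ α₁.degree := one_le_of_pos_withbot h
      have : (2 : WithBot ℕ) ≤ (β₁' - β₁).degree := by
        rw [hq, Polynomial.degree_mul]
        calc (2 : WithBot ℕ) = 1 + 1 := by norm_num
        _ ≤ α₁.degree + q.degree := add_le_add h1 hq1
      have hle : (β₁' - β₁).degree ≤ 1 := le_trans (Polynomial.degree_sub_le _ _) (max_le hb₁' hb₁)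
      exact absurd (le_trans this hle) (by norm_num)
    have hα₂deg : α₂.degree ≤ 0 := by
      by_contra h
      push_neg at h
      have h1 : (1 : WithBot ℕ) ≤ α₂.degree := one_le_of_pos_withbot h
      have : (2 : WithBot ℕ) ≤ (β₂' - β₂).degree := by
        rw [hq2, Polynomial.degree_mul]
        calc (2 : WithBot ℕ) = 1 + 1 := by norm_num
        _ ≤ α₂.degree + q.degree := add_le_add h1 hq1
      have hle : (β₂' - β₂).degree ≤ 1 := le_trans (Polynomial.degree_sub_le _ _) (max_le hb₂' hb₂)
      exact absurd (le_trans this hle) (by norm_num)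
    obtain ⟨a, ha⟩ : ∃ a, α₁ = Polynomial.C a := ⟨α₁.coeff 0, Polynomial.degree_le_zero_iff.mp hα₁deg⟩
    obtain ⟨b, hb⟩ : ∃ b, α₂ = Polynomial.C b := ⟨α₂.coeff 0, Polynomial.degree_le_zero_iff.mp hα₂deg⟩
    have ha0 : a ≠ 0 := fun h => hα₁ (by rw [ha, h, map_zero])
    have hdep : b • α₁ + (-a) • α₂ = 0 := by
      rw [Polynomial.smul_eq_C_mul, Polynomial.smul_eq_C_mul, map_neg]
      linear_combination Polynomial.C b * ha - Polynomial.C a * hb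
    exact ha0 (neg_eq_zero.mp (hpair b (-a) hdep).2)
  obtain ⟨r, hr⟩ : ∃ r, q = Polynomial.C r := ⟨q.coeff 0, Polynomial.degree_le_zero_iff.mp hqdeg⟩
  refine ⟨r, ?_, ?_⟩
  · rw [Polynomial.smul_eq_C_mul]
    have := hq
    rw [hr] at this
    linear_combination this
  · rw [Polynomial.smul_eq_C_mul]
    have := hq2
    rw [hr] at this
    linear_combination this
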